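/- arXiv:1511.03547 — 2 statements merged into one kernel-verified Lean document; each statement's English description precedes it below -/
import Mathlib

section
/- Let U ⊆ S^m_d be a quasi-stable monomial module and let W ⊆ S^m_d be a finitely generated graded submodule such that (S^m_d)_s = W_s ⊕ ⟨N(U)_s⟩^A as A-modules for every degree s. Then W is generated by a P(U)-marked basis. -/
open MvPolynomial

namespace MB

/-- Exponent (multi-index) of a term in the variables `x_0, …, x_n`. -/
abbrev Exp (n : ℕ) := Fin (n+1) →₀ ℕ

variable {n : ℕ}

/-- Total degree of a term. -/
def degE (α : Exp n) : ℕ := α.sum fun _ e => e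

/-- `x_i` is a multiplicative variable for the term `x^α`, i.e. `x_i ≤ min(x^α)`. -/
def mult (α : Exp n) (i : Fin (n+1)) : Prop := ∀ j ∈ α.support, i ≤ j

/-- Every variable occurring in `x^δ` is multiplicative for `x^α`. -/
def multExp (α δ : Exp n) : Prop := ∀ i ∈ δ.support, mult α i

/-- Pommaret cone of a term. -/
def pommaretCone (α : Exp n) : Set (Exp n) := {γ | ∃ δ, multExp α δ ∧ γ = α + δ}

/-- A set of terms is (the set of terms of) a monomial ideal. -/
def IsMonomialIdeal (T : Set (Exp n)) : Prop := ∀ α ∈ T, ∀ β, α + β ∈ T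

/-- `P` is a Pommaret basis of the set of terms `T`: the terms of `T` are the
disjoint union of the Pommaret cones of the elements of `P`. -/
def IsPommaretBasis (P : Finset (Exp n)) (T : Set (Exp n)) : Prop :=
  (∀ γ, γ ∈ T ↔ ∃ α ∈ P, γ ∈ pommaretCone α) ∧
  ∀ γ : Exp n, ∀ α ∈ P, ∀ β ∈ P, γ ∈ pommaretCone α → γ ∈ pommaretCone β → α = β

/-- Lexicographic order on terms (with `x_n > … > x_0` significance). -/
def lexLt (η δ : Exp n) : Prop := ∃ i, η i < δ i ∧ ∀ j, i < j → η j = δ j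

/-- Terms of the saturation `(J : (x_0,…,x_n)^∞)` of a monomial ideal. -/
def satTerms (T : Set (Exp n)) : Set (Exp n) :=
  {α | ∃ j : ℕ, ∀ β : Exp n, degE β = j → α + β ∈ T}

section ModuleDefs

variable (A : Type*) [CommRing A] {κ : Type*} [Fintype κ] [DecidableEq κ]

/-- The term `x^α e_k` of the free module. -/
noncomputable def termV (α : Exp n) (k : κ) : κ → MvPolynomial (Fin (n+1)) A :=
  Pi.single k (monomial α 1)

variable {A}

/-- Homogeneity of degree `s` in `S^m_d` (with weight vector `d`). -/
def IsHomogV (d : κ → ℤ) (f : κ → MvPolynomial (Fin (n+1)) A) (s : ℤ) : Prop :=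
  ∀ k, ∀ β ∈ (f k).support, (degE β : ℤ) + d k = s

variable (A)

/-- The degree-`s` component `(S^m_d)_s` as an `A`-submodule. -/
noncomputable def homogCompV (d : κ → ℤ) (s : ℤ) :
    Submodule A (κ → MvPolynomial (Fin (n+1)) A) where
  carrier := {f | IsHomogV d f s}
  add_mem' := by
    intro f g hf hg k β hβ
    rcases Finset.mem_union.mp (MvPolynomial.support_add hβ) with h | h
    · exact hf k β h
    · exact hg k β h
  zero_mem' := by intro k β hβ; simp at hβ
  smul_mem' := by
    intro a f hf k β hβ
    exact hf k β (MvPolynomial.support_smul hβ)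

/-- The set `N(U)` of terms of `S^m_d` not belonging to the monomial module `U = ⊕ J^(k) e_k`. -/
def NUTerms (J : κ → Set (Exp n)) : Set (κ → MvPolynomial (Fin (n+1)) A) :=
  {v | ∃ k, ∃ α, α ∉ J k ∧ v = termV A α k}

/-- The degree-`s` part `N(U)_s`. -/
def NUTermsDeg (d : κ → ℤ) (J : κ → Set (Exp n)) (s : ℤ) :
    Set (κ → MvPolynomial (Fin (n+1)) A) :=
  {v | ∃ k, ∃ α, α ∉ J k ∧ (degE α : ℤ) + d k = s ∧ v = termV A α k}

variable {A}

/-- A `P(U)`-marked set: for each `x^α e_k` with `α ∈ P k`, the element `g α k` has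
head term `x^α e_k` (coefficient `1`) and all other terms in `N(U)` of the same degree. -/
def IsMarkedSetV (d : κ → ℤ) (J : κ → Set (Exp n)) (P : κ → Finset (Exp n))
    (g : Exp n → κ → (κ → MvPolynomial (Fin (n+1)) A)) : Prop :=
  ∀ k, ∀ α ∈ P k, ∀ l, ∀ β ∈ ((g α k - termV A α k) l).support,
    β ∉ J l ∧ (degE β : ℤ) + d l = (degE α : ℤ) + d k

/-- The underlying set of elements of the marked set `G`. -/
def GSet (P : κ → Finset (Exp n)) (g : Exp n → κ → (κ → MvPolynomial (Fin (n+1)) A)) :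
    Set (κ → MvPolynomial (Fin (n+1)) A) :=
  {v | ∃ k, ∃ α ∈ P k, v = g α k}

/-- The set `G^(s)` of multiplicative multiples of elements of `G` of degree `s`. -/
def GSdeg (d : κ → ℤ) (P : κ → Finset (Exp n))
    (g : Exp n → κ → (κ → MvPolynomial (Fin (n+1)) A)) (s : ℤ) :
    Set (κ → MvPolynomial (Fin (n+1)) A) :=
  {v | ∃ k, ∃ α ∈ P k, ∃ δ : Exp n, multExp α δ ∧
    (degE δ : ℤ) + (degE α : ℤ) + d k = s ∧ v = (monomial δ (1:A)) • g α k}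

/-- The `S`-submodule `⟨G⟩` generated by the marked set. -/
noncomputable def GmodS (P : κ → Finset (Exp n))
    (g : Exp n → κ → (κ → MvPolynomial (Fin (n+1)) A)) :
    Submodule (MvPolynomial (Fin (n+1)) A) (κ → MvPolynomial (Fin (n+1)) A) :=
  Submodule.span _ (GSet P g)

/-- The degree-`s` component `⟨G⟩_s` as an `A`-submodule. -/
noncomputable def GmodDeg (d : κ → ℤ) (P : κ → Finset (Exp n))
    (g : Exp n → κ → (κ → MvPolynomial (Fin (n+1)) A)) (s : ℤ) :
    Submodule A (κ → MvPolynomial (Fin (n+1)) A) :=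
  (GmodS P g).restrictScalars A ⊓ homogCompV A d s

/-- `G` is a marked basis: `(S^m_d)_s = ⟨G⟩_s ⊕ ⟨N(U)_s⟩^A` for every degree `s`. -/
def MarkedBasisProp (d : κ → ℤ) (J : κ → Set (Exp n)) (P : κ → Finset (Exp n))
    (g : Exp n → κ → (κ → MvPolynomial (Fin (n+1)) A)) : Prop :=
  ∀ s : ℤ,
    homogCompV A d s = GmodDeg d P g s ⊔ Submodule.span A (NUTermsDeg A d J s) ∧
    GmodDeg d P g s ⊓ Submodule.span A (NUTermsDeg A d J s) = ⊥

/-- One step of the reduction relation `→_G`. -/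
def RedStep (P : κ → Finset (Exp n)) (g : Exp n → κ → (κ → MvPolynomial (Fin (n+1)) A))
    (h h' : κ → MvPolynomial (Fin (n+1)) A) : Prop :=
  ∃ k, ∃ α ∈ P k, ∃ η : Exp n, multExp α η ∧
    (h k).coeff (η + α) ≠ 0 ∧
    h' = h - ((h k).coeff (η + α)) • ((monomial η (1:A)) • g α k)

end ModuleDefs

section IdealDefs

variable {A : Type*} [CommRing A]

/-- A `P(J)`-marked set of polynomials. -/
def IsMarkedSetI (T : Set (Exp n)) (P : Finset (Exp n))
    (g : Exp n → MvPolynomial (Fin (n+1)) A) : Prop :=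
  ∀ α ∈ P, ∀ β ∈ (g α - monomial α (1:A)).support, β ∉ T ∧ degE β = degE α

variable (A)

/-- The degree-`s` monomials not in `T`. -/
def NTermsDegI (T : Set (Exp n)) (s : ℕ) : Set (MvPolynomial (Fin (n+1)) A) :=
  {p | ∃ β, β ∉ T ∧ degE β = s ∧ p = monomial β (1:A)}

variable {A}

/-- Degree-`s` part of the ideal generated by the marked set. -/
noncomputable def IdealDegI (P : Finset (Exp n)) (g : Exp n → MvPolynomial (Fin (n+1)) A)
    (s : ℕ) : Submodule A (MvPolynomial (Fin (n+1)) A) :=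
  (Ideal.span (g '' ↑P)).restrictScalars A ⊓ homogeneousSubmodule (Fin (n+1)) A s

/-- A `P(J)`-marked basis of polynomials: `S_s = (G)_s ⊕ ⟨N(J)_s⟩^A` for all `s`. -/
def IsMarkedBasisI (T : Set (Exp n)) (P : Finset (Exp n))
    (g : Exp n → MvPolynomial (Fin (n+1)) A) : Prop :=
  IsMarkedSetI T P g ∧ ∀ s : ℕ,
    homogeneousSubmodule (Fin (n+1)) A s
      = IdealDegI P g s ⊔ Submodule.span A (NTermsDegI A T s) ∧
    IdealDegI P g s ⊓ Submodule.span A (NTermsDegI A T s) = ⊥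

/-- The polynomial `p` involves only multiplicative variables of `x^α`. -/
def multPoly (α : Exp n) (p : MvPolynomial (Fin (n+1)) A) : Prop :=
  ∀ β ∈ p.support, multExp α β

end IdealDefs

section SyzDefs

variable {A : Type*} [CommRing A]

/-- The map `(c_l) ↦ Σ_l c_l f_{α(l)}` whose kernel is `Syz(G)`. -/
noncomputable def syzMap (P : Finset (Exp n)) (g : Exp n → MvPolynomial (Fin (n+1)) A) :
    (↥P → MvPolynomial (Fin (n+1)) A) →ₗ[MvPolynomial (Fin (n+1)) A]
      MvPolynomial (Fin (n+1)) A where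
  toFun c := ∑ l : ↥P, c l * g l.1
  map_add' c c' := by simp [add_mul, Finset.sum_add_distrib]
  map_smul' a c := by simp [Finset.mul_sum, mul_assoc]

/-- Weight vector for the syzygy module: `d_l = deg x^{α(l)}`. -/
def ddeg (P : Finset (Exp n)) : ↥P → ℤ := fun l => (degE l.1 : ℤ)

/-- Terms of the monomial ideal generated by the nonmultiplicative variables of `x^{α(l)}`. -/
def Jsyz (P : Finset (Exp n)) : ↥P → Set (Exp n) :=
  fun l => {β | ∃ i ∈ β.support, ¬ mult (l : Exp n) i}

open Classical in
/-- The claimed Pommaret basis `{x_i e_l : x_i nonmultiplicative for x^{α(l)}}`. -/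
noncomputable def Psyz (P : Finset (Exp n)) : ↥P → Finset (Exp n) := fun l =>
  (Finset.univ.filter fun i : Fin (n+1) => ¬ mult (l : Exp n) i).image
    fun i => Finsupp.single i 1

open Classical in
/-- The syzygy `S_{k;i} = x_i e_k − Σ_l P_l^{k;i} e_l`. -/
noncomputable def Ssyz (P : Finset (Exp n))
    (Pc : ↥P → Fin (n+1) → ↥P → MvPolynomial (Fin (n+1)) A)
    (k : ↥P) (i : Fin (n+1)) : ↥P → MvPolynomial (Fin (n+1)) A :=
  fun l => (if l = k then (X i : MvPolynomial (Fin (n+1)) A) else 0) - Pc k i l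

/-- The set `G_Syz^(s)`. -/
def GSyzDeg (P : Finset (Exp n))
    (Pc : ↥P → Fin (n+1) → ↥P → MvPolynomial (Fin (n+1)) A) (s : ℤ) :
    Set (↥P → MvPolynomial (Fin (n+1)) A) :=
  {v | ∃ k : ↥P, ∃ i : Fin (n+1), ¬ mult (k : Exp n) i ∧ ∃ δ : Exp n,
    (∀ j ∈ δ.support, j ≤ i) ∧ (degE δ : ℤ) + 1 + ddeg P k = s ∧
    v = (monomial δ (1:A)) • Ssyz P Pc k i}

end SyzDefs


section AuxProof

theorem lexLt_total (η δ : Exp n) : lexLt η δ ∨ η = δ ∨ lexLt δ η := by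
  classical
  by_cases h : η = δ
  · exact Or.inr (Or.inl h)
  · have hne : ∃ i, η i ≠ δ i := by
      by_contra hc
      push_neg at hc
      exact h (Finsupp.ext hc)
    set s : Finset (Fin (n+1)) := Finset.univ.filter (fun j => η j ≠ δ j) with hs
    have hsne : s.Nonempty := by
      obtain ⟨i, hi⟩ := hne
      exact ⟨i, by simp [hs, hi]⟩
    have hi : η (s.max' hsne) ≠ δ (s.max' hsne) := by
      have := s.max'_mem hsne
      simp only [hs, Finset.mem_filter] at this
      exact this.2
    have hgt : ∀ j, s.max' hsne < j → η j = δ j := by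
      intro j hj
      by_contra hc
      have hjs : j ∈ s := by simp [hs, hc]
      exact absurd (s.le_max' j hjs) (not_le.mpr hj)
    rcases lt_or_gt_of_ne hi with h1 | h1
    · exact Or.inl ⟨_, h1, hgt⟩
    · exact Or.inr (Or.inr ⟨_, h1, fun j hj => (hgt j hj).symm⟩)

theorem lexLt_wf : WellFounded (@lexLt n) := by
  have h : WellFounded (Finsupp.Lex (α := Fin (n+1)) (N := ℕ) (· > ·) (· < ·)) := by
    refine Finsupp.Lex.wellFounded' (fun m => Nat.not_lt_zero m) (Nat.lt_wfRel.wf) ?_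
    exact (wellFounded_lt : WellFounded ((· < ·) : Fin (n+1) → Fin (n+1) → Prop))
  refine Subrelation.wf ?_ h
  rintro η δ ⟨i, h1, h2⟩
  exact ⟨i, fun d hd => h2 d hd, h1⟩

/-- The key combinatorial lemma: if `η ∉ T` but `η + δ ∈ T` with Pommaret
decomposition `η + δ = α' + δ'`, then `δ' <_lex δ`. -/
theorem key_lex {T : Set (Exp n)} {P : Finset (Exp n)} (hPB : IsPommaretBasis P T)
    {η δ α' δ' : Exp n} (hη : η ∉ T) (hα' : α' ∈ P) (hm : multExp α' δ')
    (heq : η + δ = α' + δ') : lexLt δ' δ := by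
  have hcoord : ∀ j, η j + δ j = α' j + δ' j := by
    intro j
    have := congrArg (fun f : Exp n => f j) heq
    simpa using this
  rcases lexLt_total δ' δ with h | h | h
  · exact h
  · exfalso
    apply hη
    subst h
    have hηα : η = α' := by
      have := add_right_cancel (heq : η + δ' = α' + δ')
      exact this
    refine (hPB.1 η).mpr ⟨α', hα', 0, ?_, by rw [add_zero, hηα]⟩
    intro i hi
    simp at hi
  · exfalso
    apply hη
    obtain ⟨i, hiδ, hieq⟩ := h
    have himult : mult α' i := hm i (Finsupp.mem_support_iff.mpr (by omega))
    have hα'lt : ∀ j, j < i → α' j = 0 := by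
      intro j hj
      by_contra hc
      exact absurd (himult j (Finsupp.mem_support_iff.mpr hc)) (not_le.mpr hj)
    have hge : ∀ j, α' j ≤ η j := by
      intro j
      rcases lt_trichotomy j i with hj | hj | hj
      · rw [hα'lt j hj]; exact Nat.zero_le _
      · subst hj; have := hcoord j; omega
      · have h1 := hcoord j; have h2 := hieq j hj; omega
    refine (hPB.1 η).mpr ⟨α', hα', η - α', ?_, ?_⟩
    · intro j hj
      have hjle : j ≤ i := by
        by_contra hc
        push_neg at hc
        have h1 := hcoord j
        have h2 := hieq j hc
        have h3 : η j = α' j := by omega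
        rw [Finsupp.mem_support_iff, Finsupp.tsub_apply, h3] at hj
        omega
      intro t ht
      exact le_trans hjle (himult t ht)
    · ext j
      rw [Finsupp.add_apply, Finsupp.tsub_apply]
      have := hge j
      omega

variable {A : Type*} [CommRing A] {κ : Type*} [Fintype κ] [DecidableEq κ]

theorem degE_add (α β : Exp n) : degE (α + β) = degE α + degE β :=
  Finsupp.sum_add_index' (fun _ => rfl) (fun _ _ _ => rfl)

theorem termV_apply (α : Exp n) (k l : κ) :
    termV A α k l = if l = k then monomial α 1 else 0 := Pi.single_apply _ _ _

theorem support_termV {α : Exp n} {k l : κ} {β : Exp n}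
    (h : β ∈ ((termV A α k) l).support) : l = k ∧ β = α := by
  classical
  by_cases hl : l = k
  · subst hl
    rw [termV_apply, if_pos rfl] at h
    rw [MvPolynomial.support_monomial] at h
    split_ifs at h
    · simp at h
    · exact ⟨rfl, Finset.mem_singleton.mp h⟩
  · rw [termV_apply, if_neg hl] at h
    simp at h

theorem shift_decomp (δ : Exp n) (t : κ → MvPolynomial (Fin (n+1)) A) :
    (monomial δ (1:A)) • t
      = ∑ l : κ, ∑ β ∈ (t l).support, ((t l).coeff β) • termV A (β + δ) l := by
  funext l'
  have h1 : ((monomial δ (1:A)) • t) l' = monomial δ 1 * t l' := rfl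
  rw [h1]
  rw [Finset.sum_apply]
  have h2 : ∀ l : κ, (∑ β ∈ (t l).support, ((t l).coeff β) • termV A (β + δ) l) l'
      = ∑ β ∈ (t l).support, ((t l).coeff β) • (termV A (β + δ) l l') := by
    intro l; simp only [Finset.sum_apply, Pi.smul_apply]
  simp only [h2]
  rw [Finset.sum_eq_single l']
  · conv_lhs => rw [MvPolynomial.as_sum (t l')]
    rw [Finset.mul_sum]
    refine Finset.sum_congr rfl ?_
    intro β hβ
    rw [termV_apply, if_pos rfl, MvPolynomial.monomial_mul, MvPolynomial.smul_monomial,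
      one_mul, smul_eq_mul, mul_one, add_comm δ β]
  · intro l _ hl
    refine Finset.sum_eq_zero ?_
    intro β _
    rw [termV_apply, if_neg (Ne.symm hl), smul_zero]
  · intro h
    exact absurd (Finset.mem_univ l') h

theorem mem_of_shift_terms (M : Submodule A (κ → MvPolynomial (Fin (n+1)) A)) (δ : Exp n)
    (t : κ → MvPolynomial (Fin (n+1)) A)
    (h : ∀ l β, β ∈ (t l).support → termV A (β + δ) l ∈ M) :
    (monomial δ (1:A)) • t ∈ M := by
  rw [shift_decomp]
  exact Submodule.sum_mem _ fun l _ =>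
    Submodule.sum_mem _ fun β hβ => Submodule.smul_mem _ _ (h l β hβ)

theorem mem_of_terms (M : Submodule A (κ → MvPolynomial (Fin (n+1)) A))
    (f : κ → MvPolynomial (Fin (n+1)) A)
    (h : ∀ l β, β ∈ (f l).support → termV A β l ∈ M) : f ∈ M := by
  have h0 := mem_of_shift_terms M 0 f (fun l β hβ => by simpa using h l β hβ)
  rwa [MvPolynomial.monomial_zero', MvPolynomial.C_1, one_smul] at h0

theorem isHomog_shift {d : κ → ℤ} {t : κ → MvPolynomial (Fin (n+1)) A} {s₀ : ℤ}
    (h : IsHomogV d t s₀) (δ : Exp n) :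
    IsHomogV d ((monomial δ (1:A)) • t) ((degE δ : ℤ) + s₀) := by
  classical
  intro k β hβ
  have hβ' : β ∈ (monomial δ (1:A) * t k).support := hβ
  have hmem := MvPolynomial.support_mul (monomial δ (1:A)) (t k) hβ'
  obtain ⟨u, hu, v, hv, huv⟩ := Finset.mem_add.mp hmem
  have hu' : u = δ := by
    rw [MvPolynomial.support_monomial] at hu
    split_ifs at hu
    · simp at hu
    · exact Finset.mem_singleton.mp hu
  subst hu'
  have hd := h k v hv
  rw [← huv, degE_add]
  push_cast
  omega

end AuxProof
/-- Corollary `LemmaCri`: a finitely generated graded submodule `W` with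
`(S^m_d)_s = W_s ⊕ ⟨N(U)_s⟩^A` for every `s` is generated by a `P(U)`-marked basis. -/
theorem statement11 {n : ℕ} {κ : Type*} [Fintype κ] [DecidableEq κ] (hm : Nonempty κ)
    {A : Type*} [CommRing A] [IsNoetherianRing A]
    (d : κ → ℤ) (J : κ → Set (Exp n)) (P : κ → Finset (Exp n))
    (hQS : ∀ k, IsMonomialIdeal (J k) ∧ IsPommaretBasis (P k) (J k))
    (W : Submodule (MvPolynomial (Fin (n+1)) A) (κ → MvPolynomial (Fin (n+1)) A))
    (hfg : W.FG)
    (hgr : W = Submodule.span (MvPolynomial (Fin (n+1)) A)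
        {f | f ∈ W ∧ ∃ s : ℤ, IsHomogV d f s})
    (hdec : ∀ s : ℤ,
      homogCompV A d s
        = (W.restrictScalars A ⊓ homogCompV A d s)
          ⊔ Submodule.span A (NUTermsDeg A d J s) ∧
      (W.restrictScalars A ⊓ homogCompV A d s)
          ⊓ Submodule.span A (NUTermsDeg A d J s) = ⊥) :
    ∃ gb : Exp n → κ → (κ → MvPolynomial (Fin (n+1)) A),
      IsMarkedSetV d J P gb ∧ MarkedBasisProp d J P gb ∧ GmodS P gb = W := by
  classical
  -- every term is homogeneous of its natural degree
  have htermhom : ∀ (α : Exp n) (k : κ),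
      termV A α k ∈ homogCompV A d ((degE α : ℤ) + d k) := by
    intro α k l β hβ
    obtain ⟨hl, hβα⟩ := support_termV hβ
    subst hl; subst hβα
    rfl
  -- choose the marked set `g` via the direct sum decomposition
  have hchoice : ∀ (α : Exp n) (k : κ), ∃ w : κ → MvPolynomial (Fin (n+1)) A,
      (w ∈ W ∧ IsHomogV d w ((degE α : ℤ) + d k)) ∧
      termV A α k - w ∈ Submodule.span A (NUTermsDeg A d J ((degE α : ℤ) + d k)) := by
    intro α k
    have h1 : termV A α k ∈
        (W.restrictScalars A ⊓ homogCompV A d ((degE α : ℤ) + d k))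
          ⊔ Submodule.span A (NUTermsDeg A d J ((degE α : ℤ) + d k)) := by
      rw [← (hdec _).1]; exact htermhom α k
    obtain ⟨y, hy, z, hz, hyz⟩ := Submodule.mem_sup.mp h1
    obtain ⟨hy1, hy2⟩ := Submodule.mem_inf.mp hy
    refine ⟨y, ⟨hy1, hy2⟩, ?_⟩
    have : termV A α k - y = z := by rw [← hyz]; abel
    rw [this]; exact hz
  choose g hgW hgtail using hchoice
  -- elements of the span of N(U)_s have all their terms in N(U) of degree s
  have htailsub : ∀ s : ℤ, ∀ f ∈ Submodule.span A (NUTermsDeg A d J s),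
      ∀ l β, β ∈ (f l).support → β ∉ J l ∧ (degE β : ℤ) + d l = s := by
    intro s f hf
    set M : Submodule A (κ → MvPolynomial (Fin (n+1)) A) :=
      { carrier := {f | ∀ l β, β ∈ (f l).support → β ∉ J l ∧ (degE β : ℤ) + d l = s}
        add_mem' := by
          intro f g hfm hgm l β hβ
          rcases Finset.mem_union.mp (MvPolynomial.support_add hβ) with h | h
          · exact hfm l β h
          · exact hgm l β h
        zero_mem' := by intro l β hβ; simp at hβ
        smul_mem' := by
          intro a f hfm l β hβ
          exact hfm l β (MvPolynomial.support_smul hβ) } with hM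
    have hle : Submodule.span A (NUTermsDeg A d J s) ≤ M := by
      rw [Submodule.span_le]
      rintro v ⟨k, α, hα, hdeg, rfl⟩
      intro l β hβ
      obtain ⟨hl, hβα⟩ := support_termV hβ
      subst hl; subst hβα
      exact ⟨hα, hdeg⟩
    exact hle hf
  -- the marked set property
  have hmarked : IsMarkedSetV d J P g := by
    intro k α hα l β hβ
    have h1 : β ∈ ((termV A α k - g α k) l).support := by
      have heq : (g α k - termV A α k) l = -((termV A α k - g α k) l) := by
        simp [neg_sub]
      rw [heq, MvPolynomial.support_neg] at hβ
      exact hβ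
    exact htailsub _ _ (hgtail α k) l β h1
  -- ⟨G⟩ ⊆ W
  have hGW : GmodS P g ≤ W := by
    rw [GmodS, Submodule.span_le]
    rintro v ⟨k, α, hα, rfl⟩
    exact (hgW α k).1
  have hGdegW : ∀ s, GmodDeg d P g s ≤ W.restrictScalars A ⊓ homogCompV A d s := by
    intro s x hx
    obtain ⟨hx1, hx2⟩ := Submodule.mem_inf.mp hx
    exact Submodule.mem_inf.mpr ⟨hGW hx1, hx2⟩
  -- the heart: the reduction process, by well-founded induction on the lex order
  have claimC : ∀ δ : Exp n, ∀ s : ℤ, ∀ k, ∀ α ∈ P k, ((degE (α + δ) : ℤ) + d k = s) →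
      termV A (α + δ) k ∈ GmodDeg d P g s ⊔ Submodule.span A (NUTermsDeg A d J s) := by
    intro δ
    refine lexLt_wf.induction (C := fun δ => ∀ s : ℤ, ∀ k, ∀ α ∈ P k,
      ((degE (α + δ) : ℤ) + d k = s) →
      termV A (α + δ) k ∈ GmodDeg d P g s ⊔ Submodule.span A (NUTermsDeg A d J s)) δ ?_
    clear δ
    intro δ IH s k α hα hdeg
    have hgdeg := (hgW α k).2
    have hv1 : (monomial δ (1:A)) • g α k ∈ GmodS P g :=
      Submodule.smul_mem _ _ (Submodule.subset_span ⟨k, α, hα, rfl⟩)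
    have hv2 : IsHomogV d ((monomial δ (1:A)) • g α k) s := by
      have h1 := isHomog_shift hgdeg δ
      have h2 : (degE δ : ℤ) + ((degE α : ℤ) + d k) = s := by
        rw [← hdeg, degE_add]; push_cast; ring
      rwa [h2] at h1
    have hv : (monomial δ (1:A)) • g α k ∈ GmodDeg d P g s :=
      Submodule.mem_inf.mpr ⟨hv1, hv2⟩
    have hsplit : termV A (α + δ) k
        = (monomial δ (1:A)) • g α k + (monomial δ (1:A)) • (termV A α k - g α k) := by
      rw [← smul_add, add_sub_cancel]
      funext l
      rw [Pi.smul_apply, termV_apply, termV_apply]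
      by_cases hl : l = k
      · rw [if_pos hl, if_pos hl, smul_eq_mul, MvPolynomial.monomial_mul, one_mul,
          add_comm δ α]
      · rw [if_neg hl, if_neg hl, smul_zero]
    rw [hsplit]
    refine Submodule.add_mem _ (Submodule.mem_sup_left hv) ?_
    refine mem_of_shift_terms _ δ _ ?_
    intro l β hβ
    obtain ⟨hβJ, hβdeg⟩ := htailsub _ _ (hgtail α k) l β hβ
    have hdegβδ : (degE (β + δ) : ℤ) + d l = s := by
      rw [degE_add]
      rw [degE_add] at hdeg
      push_cast at hβdeg hdeg ⊢
      linarith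
    by_cases hU : β + δ ∈ J l
    · obtain ⟨α'', hα'', δ'', hm'', heq''⟩ := ((hQS l).2.1 (β + δ)).mp hU
      have hlex : lexLt δ'' δ := key_lex (hQS l).2 hβJ hα'' hm'' heq''
      have hdeg'' : (degE (α'' + δ'') : ℤ) + d l = s := by rw [← heq'']; exact hdegβδ
      have hres := IH δ'' hlex s l α'' hα'' hdeg''
      rw [heq'']
      exact hres
    · exact Submodule.mem_sup_right (Submodule.subset_span ⟨l, β + δ, hU, hdegβδ, rfl⟩)
  -- every homogeneous element decomposes
  have hmain : ∀ s, homogCompV A d s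
      ≤ GmodDeg d P g s ⊔ Submodule.span A (NUTermsDeg A d J s) := by
    intro s f hf
    refine mem_of_terms _ f ?_
    intro l β hβ
    have hdegβ : (degE β : ℤ) + d l = s := hf l β hβ
    by_cases hU : β ∈ J l
    · obtain ⟨α, hα, δ, hm, heq⟩ := ((hQS l).2.1 β).mp hU
      rw [heq]
      refine claimC δ s l α hα ?_
      rw [← heq]; exact hdegβ
    · exact Submodule.mem_sup_right (Submodule.subset_span ⟨l, β, hU, hdegβ, rfl⟩)
  -- hence W_s = ⟨G⟩_s
  have hWG : ∀ s, W.restrictScalars A ⊓ homogCompV A d s = GmodDeg d P g s := by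
    intro s
    apply le_antisymm
    · intro w hw
      have h1 := hmain s (Submodule.mem_inf.mp hw).2
      obtain ⟨u, hu, z, hz, huz⟩ := Submodule.mem_sup.mp h1
      have hzW : z ∈ W.restrictScalars A ⊓ homogCompV A d s := by
        have hzwu : z = w - u := by rw [← huz]; abel
        rw [hzwu]
        exact Submodule.sub_mem _ hw (hGdegW s hu)
      have hz0 : z ∈ (W.restrictScalars A ⊓ homogCompV A d s)
          ⊓ Submodule.span A (NUTermsDeg A d J s) := Submodule.mem_inf.mpr ⟨hzW, hz⟩
      rw [(hdec s).2] at hz0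
      have hz0' : z = 0 := hz0
      rw [← huz, hz0', add_zero]
      exact hu
    · exact hGdegW s
  refine ⟨g, hmarked, ?_, ?_⟩
  · intro s
    constructor
    · rw [← hWG s]; exact (hdec s).1
    · rw [← hWG s]; exact (hdec s).2
  · apply le_antisymm hGW
    conv_lhs => rw [hgr]
    rw [Submodule.span_le]
    rintro f ⟨hfW, s, hfhom⟩
    have hf : f ∈ GmodDeg d P g s := by
      rw [← hWG s]
      exact Submodule.mem_inf.mpr ⟨hfW, hfhom⟩
    exact (Submodule.mem_inf.mp hf).1


end MB
end

section
/- Let U ⊆ S^m_d be a quasi-stable monomial module and G a P(U)-marked basis. Then for every degree s the A-module ⟨G⟩_s is free of rank equal to the number of terms of U of degree s; in particular the S-module ⟨G⟩ generated by G admits a Hilbert function and it coincides with the Hilbert function of U. -/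
/-!
Taking coefficients on the terms of `U` is an `A`-linear map from `(S^m_d)_s` onto the free
module on the degree-`s` terms of `U`, and its kernel is `⟨N(U)_s⟩^A`. Since
`(S^m_d)_s = ⟨G⟩_s ⊕ ⟨N(U)_s⟩^A`, its restriction to `⟨G⟩_s` is an isomorphism.
-/

open MvPolynomial

namespace MB

variable {n : ℕ}

theorem _root_.LinearMap.bijective_domRestrict_of_sup_eq {R V W : Type*} [Ring R]
    [AddCommGroup V] [Module R V] [AddCommMonoid W] [Module R W]
    {G N M : Submodule R V} (f : V →ₗ[R] W) (hsup : G ⊔ N = M) (hinf : G ⊓ N = ⊥)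
    (hker : M ⊓ LinearMap.ker f = N) (hrange : M.map f = ⊤) :
    Function.Bijective (f.domRestrict G) := by
  have hGM : G ≤ M := hsup ▸ le_sup_left
  have hNker : N ≤ LinearMap.ker f := hker ▸ inf_le_right
  constructor
  · rw [injective_iff_map_eq_zero]
    intro g hg
    have hgN : (g : V) ∈ N := hker ▸ ⟨hGM g.2, hg⟩
    have hg0 : (g : V) ∈ G ⊓ N := ⟨g.2, hgN⟩
    rw [hinf, Submodule.mem_bot] at hg0
    exact Subtype.ext hg0
  · intro w
    obtain ⟨m, hm, rfl⟩ : w ∈ M.map f := hrange ▸ Submodule.mem_top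
    obtain ⟨g, hg, x, hx, rfl⟩ := Submodule.mem_sup.1 (hsup ▸ hm : m ∈ G ⊔ N)
    refine ⟨⟨g, hg⟩, ?_⟩
    rw [LinearMap.domRestrict_apply, map_add, LinearMap.mem_ker.1 (hNker hx), add_zero]

section CoeffsOnU

variable {κ : Type*} [DecidableEq κ] {A : Type*} [CommRing A]

theorem coeff_termV (α β : Exp n) (k l : κ) :
    (termV A α k l).coeff β = if l = k ∧ β = α then 1 else 0 := by
  rcases eq_or_ne l k with rfl | h
  · simp [termV, coeff_monomial, eq_comm]
  · simp [termV, h]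

theorem termV_mem_homogCompV {d : κ → ℤ} {s : ℤ} {α : Exp n} {k : κ}
    (h : (degE α : ℤ) + d k = s) : termV A α k ∈ homogCompV A d s := by
  intro l β hβ
  rcases eq_or_ne l k with rfl | hl
  · obtain ⟨rfl, -⟩ : α = β ∧ ¬(1 : A) = 0 := by simpa [termV] using hβ
    exact h
  · simp [termV, hl] at hβ

theorem sum_coeff_smul_termV [Fintype κ] (v : κ → MvPolynomial (Fin (n+1)) A) :
    ∑ k, ∑ β ∈ (v k).support, (v k).coeff β • termV A β k = v := by
  funext l
  simp only [Finset.sum_apply, Pi.smul_apply]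
  rw [Finset.sum_eq_single l (fun k _ hk => by simp [termV, Ne.symm hk]) (by simp)]
  simp [termV, smul_monomial]

abbrev UTermsDeg (J : κ → Set (Exp n)) (d : κ → ℤ) (s : ℤ) :=
  {p : Exp n × κ // p.1 ∈ J p.2 ∧ (degE p.1 : ℤ) + d p.2 = s}

variable [Fintype κ] (J : κ → Set (Exp n)) (d : κ → ℤ) (s : ℤ)

open Classical in
noncomputable def coeffsU : (κ → MvPolynomial (Fin (n+1)) A) →ₗ[A] (UTermsDeg J d s →₀ A) where
  toFun v := Finsupp.onFinset
    ((Finset.univ.biUnion fun k => (v k).support.image fun β => (β, k)).subtype _)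
    (fun p => (v p.1.2).coeff p.1.1)
    (fun p hp => Finset.mem_subtype.2 <| Finset.mem_biUnion.2
      ⟨p.1.2, Finset.mem_univ _, Finset.mem_image.2 ⟨p.1.1, mem_support_iff.2 hp, rfl⟩⟩)
  map_add' u v := by ext; simp
  map_smul' a v := by ext; simp

theorem coeffsU_apply (v : κ → MvPolynomial (Fin (n+1)) A) (q : UTermsDeg J d s) :
    coeffsU J d s v q = (v q.1.2).coeff q.1.1 := rfl

theorem coeffsU_termV (q : UTermsDeg J d s) :
    coeffsU J d s (termV A q.1.1 q.1.2) = Finsupp.single q 1 := by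
  ext p
  rw [coeffsU_apply, coeff_termV, Finsupp.single_apply]
  simp only [Subtype.ext_iff, Prod.ext_iff, eq_comm, and_comm]

theorem coeffsU_termV_of_notMem {α : Exp n} {k : κ} (hα : α ∉ J k) :
    coeffsU J d s (termV A α k) = 0 := by
  ext q
  rw [coeffsU_apply, coeff_termV, if_neg, Finsupp.zero_apply]
  rintro ⟨rfl, rfl⟩
  exact hα q.2.1

theorem homogCompV_inf_ker_coeffsU :
    homogCompV A d s ⊓ LinearMap.ker (coeffsU J d s) = Submodule.span A (NUTermsDeg A d J s) := by
  apply le_antisymm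
  · rintro v ⟨hv, hv0⟩
    rw [← sum_coeff_smul_termV v]
    refine Submodule.sum_mem _ fun k _ => Submodule.sum_mem _ fun β hβ => ?_
    refine Submodule.smul_mem _ _ (Submodule.subset_span ⟨k, β, fun hJ => ?_, hv k β hβ, rfl⟩)
    exact mem_support_iff.1 hβ (DFunLike.congr_fun hv0 ⟨(β, k), hJ, hv k β hβ⟩)
  · rw [Submodule.span_le]
    rintro _ ⟨k, α, hα, hdeg, rfl⟩
    exact ⟨termV_mem_homogCompV hdeg, coeffsU_termV_of_notMem J d s hα⟩

theorem map_homogCompV_coeffsU : (homogCompV A d s).map (coeffsU J d s) = ⊤ := by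
  rw [eq_top_iff, ← Finsupp.basisSingleOne.span_eq, Submodule.span_le]
  rintro _ ⟨q, rfl⟩
  exact ⟨termV A q.1.1 q.1.2, termV_mem_homogCompV q.2.2, coeffsU_termV J d s q⟩

end CoeffsOnU

theorem statement13_general {n : ℕ} {κ : Type*} [Fintype κ] [DecidableEq κ]
    {A : Type*} [CommRing A]
    (d : κ → ℤ) (J : κ → Set (Exp n)) (P : κ → Finset (Exp n))
    (gb : Exp n → κ → (κ → MvPolynomial (Fin (n+1)) A))
    (hB : MarkedBasisProp d J P gb) :
    ∀ s : ℤ, Nonempty (Module.Basis {p : Exp n × κ // p.1 ∈ J p.2 ∧ (degE p.1 : ℤ) + d p.2 = s}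
      A (GmodDeg d P gb s)) := by
  intro s
  have hbij : Function.Bijective ((coeffsU J d s).domRestrict (GmodDeg d P gb s)) :=
    LinearMap.bijective_domRestrict_of_sup_eq _ (hB s).1.symm (hB s).2
      (homogCompV_inf_ker_coeffsU J d s) (map_homogCompV_coeffsU J d s)
  exact ⟨.ofRepr (.ofBijective _ hbij)⟩

/-- Remark `HFunc`: if `G` is a `P(U)`-marked basis then every component
`⟨G⟩_s` is a free `A`-module whose rank is the number of degree-`s` terms of `U`; hence
`⟨G⟩` admits a Hilbert function which coincides with the Hilbert function of `U`. -/
theorem statement13 {n : ℕ} {κ : Type*} [Fintype κ] [DecidableEq κ] (hm : Nonempty κ)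
    {A : Type*} [CommRing A] [IsNoetherianRing A]
    (d : κ → ℤ) (J : κ → Set (Exp n)) (P : κ → Finset (Exp n))
    (hQS : ∀ k, IsMonomialIdeal (J k) ∧ IsPommaretBasis (P k) (J k))
    (gb : Exp n → κ → (κ → MvPolynomial (Fin (n+1)) A))
    (hG : IsMarkedSetV d J P gb) (hB : MarkedBasisProp d J P gb) :
    ∀ s : ℤ, Nonempty (Module.Basis {p : Exp n × κ // p.1 ∈ J p.2 ∧ (degE p.1 : ℤ) + d p.2 = s}
      A (GmodDeg d P gb s)) :=
  statement13_general d J P gb hB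

end MB
end
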